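/- arXiv:1802.08887 — 6 statements merged into one kernel-verified Lean document; each statement's English description precedes it below -/
import Mathlib

section
/- For every function u : Σ_A × Σ_B → ℝ such that f*(u(x_A,x_B)) is finite for all (x_A,x_B), one has MI^f(X_A;X_B) ≥ Σ_{x_A,x_B} Pr[X_A=x_A, X_B=x_B]·u(x_A,x_B) − Σ_{x_A,x_B} Pr[X_A=x_A]·Pr[X_B=x_B]·f*(u(x_A,x_B)), and equality holds if and only if for every pair (x_A,x_B) the number u(x_A,x_B) is a subgradient of f at K(x_A,x_B). -/
/-!
Each summand is an instance of the Fenchel–Young inequality: since `Pr[a,b] = Pr[a]·Pr[b]·K(a,b)`,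
the `(a,b)`-term of the right-hand side is `Pr[a]·Pr[b]·(K·u − f*(u))`, and `K·u − f*(u) ≤ f(K)`
with equality exactly when `u` is a subgradient of `f` at `K`. Summing gives the bound, and the
sum is an equality iff every term is.
-/

noncomputable section

/-- The convex conjugate `f*(x) = sup_t (t·x − f(t))`, as a real-valued supremum. -/
def fconj (f : ℝ → ℝ) (x : ℝ) : ℝ := sSup (Set.range fun t => t * x - f t)

/-- `c` is a subgradient of `f` at `t`: `f(s) ≥ f(t) + c·(s − t)` for all `s`. -/
def IsSubgradientAt (f : ℝ → ℝ) (t c : ℝ) : Prop := ∀ s : ℝ, f t + c * (s - t) ≤ f s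

variable {SA SB : Type*}

/-- Marginal probability `Pr[X_A = a]` of the joint pmf `μ`. -/
def mA [Fintype SB] (μ : SA → SB → ℝ) (a : SA) : ℝ := ∑ b, μ a b

/-- Marginal probability `Pr[X_B = b]` of the joint pmf `μ`. -/
def mB [Fintype SA] (μ : SA → SB → ℝ) (b : SB) : ℝ := ∑ a, μ a b

/-- Pointwise mutual information `K(a,b) = Pr[a,b]/(Pr[a]·Pr[b])`. -/
def Kp [Fintype SA] [Fintype SB] (μ : SA → SB → ℝ) (a : SA) (b : SB) : ℝ :=
  μ a b / (mA μ a * mB μ b)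

/-- The f-mutual information `MI^f(X_A;X_B) = Σ_{a,b} Pr[a]·Pr[b]·f(K(a,b))`. -/
def MIp [Fintype SA] [Fintype SB] (f : ℝ → ℝ) (μ : SA → SB → ℝ) : ℝ :=
  ∑ a, ∑ b, mA μ a * mB μ b * f (Kp μ a b)

theorem mul_sub_le_fconj {f : ℝ → ℝ} {x : ℝ} (hx : BddAbove (Set.range fun t => t * x - f t))
    (t : ℝ) : t * x - f t ≤ fconj f x :=
  le_ciSup hx t

theorem fconj_le_iff_isSubgradientAt {f : ℝ → ℝ} {x : ℝ}
    (hx : BddAbove (Set.range fun t => t * x - f t)) (t : ℝ) :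
    fconj f x ≤ t * x - f t ↔ IsSubgradientAt f t x := by
  rw [fconj, csSup_le_iff hx (Set.range_nonempty _), Set.forall_mem_range]
  refine forall_congr' fun s => ?_
  constructor <;> intro h <;> linarith

theorem fconj_eq_iff_isSubgradientAt {f : ℝ → ℝ} {x : ℝ}
    (hx : BddAbove (Set.range fun t => t * x - f t)) (t : ℝ) :
    fconj f x = t * x - f t ↔ IsSubgradientAt f t x := by
  rw [← fconj_le_iff_isSubgradientAt hx, le_antisymm_iff, and_iff_left (mul_sub_le_fconj hx t)]

theorem mul_sub_mul_fconj_le {f : ℝ → ℝ} {x : ℝ} (hx : BddAbove (Set.range fun t => t * x - f t))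
    {p : ℝ} (hp : 0 ≤ p) (t : ℝ) : p * t * x - p * fconj f x ≤ p * f t := by
  nlinarith [mul_le_mul_of_nonneg_left (mul_sub_le_fconj hx t) hp]

theorem mul_sub_mul_fconj_eq_iff {f : ℝ → ℝ} {x : ℝ}
    (hx : BddAbove (Set.range fun t => t * x - f t)) {p : ℝ} (hp : p ≠ 0) (t : ℝ) :
    p * t * x - p * fconj f x = p * f t ↔ IsSubgradientAt f t x := by
  rw [← fconj_eq_iff_isSubgradientAt hx]
  constructor
  · intro h
    apply mul_left_cancel₀ hp
    linear_combination -h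
  · intro h
    rw [h]
    ring

theorem Fintype.sum_sum_eq_sum_sum_iff_of_le {α β M : Type*} [Fintype α] [Fintype β]
    [AddCommMonoid M] [PartialOrder M] [IsOrderedCancelAddMonoid M] {g h : α → β → M}
    (hle : ∀ a b, g a b ≤ h a b) :
    ∑ a, ∑ b, g a b = ∑ a, ∑ b, h a b ↔ ∀ a b, g a b = h a b := by
  rw [Finset.sum_eq_sum_iff_of_le fun a _ => Finset.sum_le_sum fun b _ => hle a b]
  simp only [Finset.mem_univ, forall_const,
    Finset.sum_eq_sum_iff_of_le fun b _ => hle _ b]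

theorem mul_mA_mB_Kp [Fintype SA] [Fintype SB] {μ : SA → SB → ℝ} {a : SA} {b : SB}
    (ha : 0 < mA μ a) (hb : 0 < mB μ b) : mA μ a * mB μ b * Kp μ a b = μ a b :=
  mul_div_cancel₀ _ (mul_pos ha hb).ne'

theorem stmt_1_general [Fintype SA] [Fintype SB]
    (μ : SA → SB → ℝ)
    (hmA : ∀ a, 0 < mA μ a) (hmB : ∀ b, 0 < mB μ b)
    (f : ℝ → ℝ)
    (u : SA → SB → ℝ)
    (hu : ∀ a b, BddAbove (Set.range fun t => t * u a b - f t)) :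
    (MIp f μ ≥ ∑ a, ∑ b, μ a b * u a b - ∑ a, ∑ b, mA μ a * mB μ b * fconj f (u a b))
    ∧ ((MIp f μ = ∑ a, ∑ b, μ a b * u a b - ∑ a, ∑ b, mA μ a * mB μ b * fconj f (u a b))
      ↔ ∀ a b, IsSubgradientAt f (Kp μ a b) (u a b)) := by
  have hsum : ∑ a, ∑ b, μ a b * u a b - ∑ a, ∑ b, mA μ a * mB μ b * fconj f (u a b)
      = ∑ a, ∑ b, (mA μ a * mB μ b * Kp μ a b * u a b - mA μ a * mB μ b * fconj f (u a b)) := by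
    simp only [mul_mA_mB_Kp (hmA _) (hmB _), ← Finset.sum_sub_distrib]
  have hle : ∀ a b, mA μ a * mB μ b * Kp μ a b * u a b - mA μ a * mB μ b * fconj f (u a b)
      ≤ mA μ a * mB μ b * f (Kp μ a b) := fun a b =>
    mul_sub_mul_fconj_le (hu a b) (mul_pos (hmA a) (hmB b)).le _
  rw [MIp, hsum, ge_iff_le, eq_comm, Fintype.sum_sum_eq_sum_sum_iff_of_le hle]
  exact ⟨Finset.sum_le_sum fun a _ => Finset.sum_le_sum fun b _ => hle a b,
    forall₂_congr fun a b => mul_sub_mul_fconj_eq_iff (hu a b) (mul_pos (hmA a) (hmB b)).ne' _⟩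

/-- Dual version of `f`-mutual information: for every `u : Σ_A × Σ_B → ℝ` with
`f*(u(a,b))` finite everywhere,
`MI^f(X_A;X_B) ≥ Σ Pr[a,b]·u(a,b) − Σ Pr[a]·Pr[b]·f*(u(a,b))`,
with equality iff `u(a,b)` is a subgradient of `f` at `K(a,b)` for every `(a,b)`. -/
theorem stmt_1 [Fintype SA] [Fintype SB] [Nonempty SA] [Nonempty SB]
    (μ : SA → SB → ℝ) (hμ0 : ∀ a b, 0 ≤ μ a b) (hμ1 : ∑ a, ∑ b, μ a b = 1)
    (hmA : ∀ a, 0 < mA μ a) (hmB : ∀ b, 0 < mB μ b)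
    (f : ℝ → ℝ) (hf : ConvexOn ℝ Set.univ f) (hf1 : f 1 = 0)
    (u : SA → SB → ℝ)
    (hu : ∀ a b, BddAbove (Set.range fun t => t * u a b - f t)) :
    (MIp f μ ≥ ∑ a, ∑ b, μ a b * u a b - ∑ a, ∑ b, mA μ a * mB μ b * fconj f (u a b))
    ∧ ((MIp f μ = ∑ a, ∑ b, μ a b * u a b - ∑ a, ∑ b, mA μ a * mB μ b * fconj f (u a b))
      ↔ ∀ a b, IsSubgradientAt f (Kp μ a b) (u a b)) :=
  stmt_1_general μ hmA hmB f u hu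
end
end

section
/- Suppose W is a random variable with values in Σ, jointly distributed with (X_A, X_B), such that Pr[W=y] > 0 for all y and X_A and X_B are conditionally independent given W. Define h_A*(x_A)(y) = Pr[W=y|X_A=x_A], h_B*(x_B)(y) = Pr[W=y|X_B=x_B] and p*(y) = Pr[W=y]. Then MIG^f(h_A*, h_B*, p*) = MI^f(X_A;X_B), and moreover MIG^f(h_A, h_B, p) ≤ MI^f(X_A;X_B) for every h_A : Σ_A → Δ_Σ, h_B : Σ_B → Δ_Σ and every p ∈ Δ_Σ with strictly positive entries. -/
noncomputable section

variable {SA SB S : Type*}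

/-- Joint probability `Pr[X_A = a, X_B = b]` induced by the joint pmf `ν` of `(X_A, X_B, Y)`. -/
def jAB [Fintype S] (ν : SA → SB → S → ℝ) (a : SA) (b : SB) : ℝ := ∑ y, ν a b y

/-- Joint probability `Pr[X_A = a, Y = y]`. -/
def jAY [Fintype SB] (ν : SA → SB → S → ℝ) (a : SA) (y : S) : ℝ := ∑ b, ν a b y

/-- Joint probability `Pr[X_B = b, Y = y]`. -/
def jBY [Fintype SA] (ν : SA → SB → S → ℝ) (b : SB) (y : S) : ℝ := ∑ a, ν a b y

/-- Marginal probability `Pr[X_A = a]`. -/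
def prA [Fintype SB] [Fintype S] (ν : SA → SB → S → ℝ) (a : SA) : ℝ := ∑ b, ∑ y, ν a b y

/-- Marginal probability `Pr[X_B = b]`. -/
def prB [Fintype SA] [Fintype S] (ν : SA → SB → S → ℝ) (b : SB) : ℝ := ∑ a, ∑ y, ν a b y

/-- Marginal probability `Pr[Y = y]`. -/
def prY [Fintype SA] [Fintype SB] (ν : SA → SB → S → ℝ) (y : S) : ℝ := ∑ a, ∑ b, ν a b y

/-- Pointwise mutual information `K(a,b) = Pr[a,b]/(Pr[a]·Pr[b])`. -/
def K [Fintype SA] [Fintype SB] [Fintype S] (ν : SA → SB → S → ℝ) (a : SA) (b : SB) : ℝ :=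
  jAB ν a b / (prA ν a * prB ν b)

/-- Conditional probability `Pr[Y = y | X_A = a]`. -/
def condA [Fintype SB] [Fintype S] (ν : SA → SB → S → ℝ) (a : SA) (y : S) : ℝ :=
  jAY ν a y / prA ν a

/-- Conditional probability `Pr[Y = y | X_B = b]`. -/
def condB [Fintype SA] [Fintype S] (ν : SA → SB → S → ℝ) (b : SB) (y : S) : ℝ :=
  jBY ν b y / prB ν b

/-- `X_A` and `X_B` are conditionally independent given `Y`:
`Pr[a, b | y] = Pr[a | y] · Pr[b | y]` for all `a, b, y`. -/
def CondIndep [Fintype SA] [Fintype SB] (ν : SA → SB → S → ℝ) : Prop :=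
  ∀ a b y, ν a b y / prY ν y = (jAY ν a y / prY ν y) * (jBY ν b y / prY ν y)

/-- `ν` is a probability mass function. -/
def IsPMF [Fintype SA] [Fintype SB] [Fintype S] (ν : SA → SB → S → ℝ) : Prop :=
  (∀ a b y, 0 ≤ ν a b y) ∧ ∑ a, ∑ b, ∑ y, ν a b y = 1

/-- `p` is a probability vector: nonnegative entries summing to `1`. -/
def IsProbVec {T : Type*} [Fintype T] (p : T → ℝ) : Prop := (∀ t, 0 ≤ p t) ∧ ∑ t, p t = 1

/-- The f-mutual information `MI^f(X_A;X_B) = Σ_{a,b} Pr[a]·Pr[b]·f(K(a,b))`. -/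
def MIf [Fintype SA] [Fintype SB] [Fintype S] (f : ℝ → ℝ) (ν : SA → SB → S → ℝ) : ℝ :=
  ∑ a, ∑ b, prA ν a * prB ν b * f (K ν a b)

/-- The agreement `g(a,b) = Σ_y h_A(a)(y)·h_B(b)(y)/p(y)`. -/
def gagr [Fintype S] (hA : SA → S → ℝ) (hB : SB → S → ℝ) (p : S → ℝ) (a : SA) (b : SB) : ℝ :=
  ∑ y, hA a y * hB b y / p y

/-- Expected `f`-mutual information gain
`MIG^f(h_A,h_B,p) = Σ Pr[a,b]·f'(g(a,b)) − Σ Pr[a]·Pr[b]·f*(f'(g(a,b)))`. -/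
def MIG [Fintype SA] [Fintype SB] [Fintype S] (f : ℝ → ℝ) (ν : SA → SB → S → ℝ)
    (hA : SA → S → ℝ) (hB : SB → S → ℝ) (p : S → ℝ) : ℝ :=
  ∑ a, ∑ b, jAB ν a b * deriv f (gagr hA hB p a b)
    - ∑ a, ∑ b, prA ν a * prB ν b * fconj f (deriv f (gagr hA hB p a b))

/-- Each agent's expected payment in the multi-task common ground mechanism `MCG(f)`. -/
def Pay [Fintype SA] [Fintype SB] [Fintype S] (f : ℝ → ℝ) (ν : SA → SB → S → ℝ)
    (sA : SA → S → ℝ) (sB : SB → S → ℝ) : ℝ :=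
  MIG f ν sA sB (prY ν)

/-- `({a^{x_A}}, {b^{x_B}}, r)` is a solution of the agreement system:
probability vectors, `r` strictly positive, with
`Σ_y a^{x_A}(y)·b^{x_B}(y)/r(y) = K(x_A,x_B)` for all `x_A, x_B`. -/
def AgreementSolution [Fintype SA] [Fintype SB] [Fintype S] (ν : SA → SB → S → ℝ)
    (a : SA → S → ℝ) (b : SB → S → ℝ) (r : S → ℝ) : Prop :=
  (∀ xa, IsProbVec (a xa)) ∧ (∀ xb, IsProbVec (b xb)) ∧ IsProbVec r ∧ (∀ y, 0 < r y) ∧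
    ∀ xa xb, (∑ y, a xa y * b xb y / r y) = K ν xa xb

/-- The prior is well-defined: any two solutions of the agreement system coincide
up to a permutation of `Σ`. -/
def WellDefinedPrior [Fintype SA] [Fintype SB] [Fintype S] (ν : SA → SB → S → ℝ) : Prop :=
  ∀ (a : SA → S → ℝ) (b : SB → S → ℝ) (r : S → ℝ)
    (c : SA → S → ℝ) (d : SB → S → ℝ) (r' : S → ℝ),
    AgreementSolution ν a b r → AgreementSolution ν c d r' →
    ∃ π : Equiv.Perm S, ∀ y, r (π y) = r' y ∧ (∀ xa, a xa (π y) = c xa y)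
      ∧ (∀ xb, b xb (π y) = d xb y)

/-- The prior is stable: fixing the truthful `A`-side (resp. `B`-side) of the agreement
system, the only solution for the other side is the truthful one. -/
def StablePrior [Fintype SA] [Fintype SB] [Fintype S] (ν : SA → SB → S → ℝ) : Prop :=
  (∀ b : SB → S → ℝ, (∀ xb, IsProbVec (b xb)) →
    (∀ xa xb, (∑ y, condA ν xa y * b xb y / prY ν y) = K ν xa xb) →
    ∀ xb y, b xb y = condB ν xb y) ∧
  (∀ a : SA → S → ℝ, (∀ xa, IsProbVec (a xa)) →
    (∀ xa xb, (∑ y, a xa y * condB ν xb y / prY ν y) = K ν xa xb) →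
    ∀ xa y, a xa y = condA ν xa y)

/-! Using `f*(f'(g)) = g f'(g) − f(g)` and `Pr[a,b] = Pr[a]Pr[b]K(a,b)`, `MIG` becomes
`Σ Pr[a]Pr[b] (f(g) + f'(g)(K − g))`: a weighted sum of tangent lines of the convex `f`, taken at
`g` and evaluated at `K`. Each is at most `f(K)`, with equality when `g = K`, and conditional
independence given `W` makes the agreement of the Bayesian posteriors with the prior exactly `K`. -/

theorem ConvexOn.isSubgradientAt_deriv {f : ℝ → ℝ} (hconv : ConvexOn ℝ Set.univ f) {t : ℝ}
    (hd : DifferentiableAt ℝ f t) : IsSubgradientAt f t (deriv f t) := by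
  intro s
  rcases lt_trichotomy t s with hts | rfl | hst
  · have h := hconv.deriv_le_slope (Set.mem_univ t) (Set.mem_univ s) hts hd
    rw [slope_def_field, le_div_iff₀ (sub_pos.mpr hts)] at h
    linarith
  · simp
  · have h := hconv.slope_le_deriv (Set.mem_univ s) (Set.mem_univ t) hst hd
    rw [slope_def_field, div_le_iff₀ (sub_pos.mpr hst)] at h
    linarith

section Agreement

variable [Fintype SA] [Fintype SB] {ν : SA → SB → S → ℝ}

theorem CondIndep.jAY_mul_jBY_div_prY (hci : CondIndep ν) (a : SA) (b : SB) {y : S}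
    (hy : prY ν y ≠ 0) : jAY ν a y * jBY ν b y / prY ν y = ν a b y := by
  have h := hci a b y
  field_simp at h
  field_simp
  linarith

variable [Fintype S]

theorem jAB_eq_mul_K {a : SA} {b : SB} (ha : prA ν a ≠ 0) (hb : prB ν b ≠ 0) :
    jAB ν a b = prA ν a * prB ν b * K ν a b := by
  rw [K]
  field_simp

theorem CondIndep.gagr_condA_condB (hci : CondIndep ν) (hW : ∀ y, prY ν y ≠ 0)
    (a : SA) (b : SB) : gagr (condA ν) (condB ν) (prY ν) a b = K ν a b := by
  have hterm : ∀ y, condA ν a y * condB ν b y / prY ν y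
      = jAY ν a y * jBY ν b y / prY ν y / (prA ν a * prB ν b) := fun y => by
    rw [condA, condB]
    ring
  simp only [gagr, hterm, hci.jAY_mul_jBY_div_prY a b (hW _), ← Finset.sum_div]
  rw [K, jAB]

theorem MIG_eq_sum_tangent (f : ℝ → ℝ) (hA : ∀ a, prA ν a ≠ 0) (hB : ∀ b, prB ν b ≠ 0)
    (hconj : ∀ t : ℝ, fconj f (deriv f t) = t * deriv f t - f t)
    (hA' : SA → S → ℝ) (hB' : SB → S → ℝ) (p : S → ℝ) :
    MIG f ν hA' hB' p = ∑ a, ∑ b, prA ν a * prB ν b *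
      (f (gagr hA' hB' p a b) + deriv f (gagr hA' hB' p a b) * (K ν a b - gagr hA' hB' p a b)) := by
  simp only [MIG, ← Finset.sum_sub_distrib, hconj, jAB_eq_mul_K (hA _) (hB _)]
  congr! 2
  ring

end Agreement

theorem stmt_4_general [Fintype SA] [Fintype SB] [Fintype S]
    (ν : SA → SB → S → ℝ)
    (hA : ∀ a, 0 < prA ν a) (hB : ∀ b, 0 < prB ν b) (hW : ∀ y, 0 < prY ν y)
    (hci : CondIndep ν)
    (f : ℝ → ℝ) (hconv : ConvexOn ℝ Set.univ f) (hdiff : Differentiable ℝ f)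
    (hconj : ∀ t : ℝ, fconj f (deriv f t) = t * deriv f t - f t) :
    MIG f ν (condA ν) (condB ν) (prY ν) = MIf f ν
    ∧ ∀ (hA' : SA → S → ℝ) (hB' : SB → S → ℝ) (p : S → ℝ),
        (∀ a, IsProbVec (hA' a)) → (∀ b, IsProbVec (hB' b)) →
        IsProbVec p → (∀ y, 0 < p y) →
        MIG f ν hA' hB' p ≤ MIf f ν := by
  have hA₀ : ∀ a, prA ν a ≠ 0 := fun a => (hA a).ne'
  have hB₀ : ∀ b, prB ν b ≠ 0 := fun b => (hB b).ne'
  refine ⟨?_, fun hA' hB' p _ _ _ _ => ?_⟩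
  · simp [MIG_eq_sum_tangent f hA₀ hB₀ hconj, hci.gagr_condA_condB fun y => (hW y).ne', MIf]
  · rw [MIG_eq_sum_tangent f hA₀ hB₀ hconj, MIf]
    gcongr with a _ b _
    · exact (mul_pos (hA a) (hB b)).le
    · exact hconv.isSubgradientAt_deriv (hdiff _) _

/-- If `W` (the `Σ`-valued coordinate of the joint pmf `ν`) has positive prior and
`X_A, X_B` are conditionally independent given `W`, then the Bayesian posterior
predictors for `W` together with the prior of `W` attain
`MIG^f = MI^f(X_A;X_B)`, and `MIG^f(h_A,h_B,p) ≤ MI^f(X_A;X_B)` for all hypotheses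
`h_A, h_B` and strictly positive probability vectors `p`. -/
theorem stmt_4 [Fintype SA] [Fintype SB] [Fintype S] [Nonempty SA] [Nonempty SB] [Nonempty S]
    (ν : SA → SB → S → ℝ) (hν : IsPMF ν)
    (hA : ∀ a, 0 < prA ν a) (hB : ∀ b, 0 < prB ν b) (hW : ∀ y, 0 < prY ν y)
    (hci : CondIndep ν)
    (f : ℝ → ℝ) (hconv : ConvexOn ℝ Set.univ f) (hdiff : Differentiable ℝ f) (hf1 : f 1 = 0)
    (hconj : ∀ t : ℝ, fconj f (deriv f t) = t * deriv f t - f t) :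
    MIG f ν (condA ν) (condB ν) (prY ν) = MIf f ν
    ∧ ∀ (hA' : SA → S → ℝ) (hB' : SB → S → ℝ) (p : S → ℝ),
        (∀ a, IsProbVec (hA' a)) → (∀ b, IsProbVec (hB' b)) →
        IsProbVec p → (∀ y, 0 < p y) →
        MIG f ν hA' hB' p ≤ MIf f ν :=
  stmt_4_general ν hA hB hW hci f hconv hdiff hconj
end
end

section
/- If X_A and X_B are conditionally independent given Y, then Σ_{x_A,x_B} Pr[X_A=x_A, X_B=x_B]·log(Σ_y Pr[Y=y|X_A=x_A]·Pr[Y=y|X_B=x_B]/Pr[Y=y]) = Σ_{x_A,x_B} Pr[X_A=x_A, X_B=x_B]·log(Pr[X_A=x_A, X_B=x_B]/(Pr[X_A=x_A]·Pr[X_B=x_B])), i.e., the honest expected payment of the common ground mechanism equals the Shannon mutual information I(X_A;X_B). -/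
noncomputable section

variable {SA SB S : Type*}

/-!
Conditional independence says `Pr[a,b,y]·Pr[y] = Pr[a,y]·Pr[b,y]`, so each summand
`Pr[y|a]·Pr[y|b]/Pr[y]` of the honest agreement equals `Pr[a,b,y]/(Pr[a]·Pr[b])`. Summing over `y`,
the agreement is the pointwise mutual information `Pr[a,b]/(Pr[a]·Pr[b])`, and the two expectations
agree term by term.
-/

namespace CondIndep

variable [Fintype SA] [Fintype SB] {ν : SA → SB → S → ℝ}

theorem mul_prY_eq (hci : CondIndep ν) {y : S} (hy : prY ν y ≠ 0) (a : SA) (b : SB) :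
    ν a b y * prY ν y = jAY ν a y * jBY ν b y := by
  have h := hci a b y
  field_simp at h
  exact h

variable [Fintype S]

theorem condA_mul_condB_div_prY (hci : CondIndep ν) {y : S} (hy : prY ν y ≠ 0) (a : SA)
    (b : SB) : condA ν a y * condB ν b y / prY ν y = ν a b y / (prA ν a * prB ν b) := by
  rw [condA, condB, div_mul_div_comm, div_div, ← hci.mul_prY_eq hy, mul_comm (prA ν a * prB ν b),
    ← div_div, mul_div_cancel_right₀ _ hy]

theorem sum_condA_mul_condB_div_prY (hci : CondIndep ν) (hY : ∀ y, 0 < prY ν y) (a : SA)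
    (b : SB) : ∑ y, condA ν a y * condB ν b y / prY ν y = K ν a b := by
  simp_rw [hci.condA_mul_condB_div_prY (hY _).ne', ← Finset.sum_div]
  rfl

end CondIndep

theorem stmt_10_general [Fintype SA] [Fintype SB] [Fintype S]
    (ν : SA → SB → S → ℝ)
    (hY : ∀ y, 0 < prY ν y)
    (hci : CondIndep ν) :
    ∑ a, ∑ b, jAB ν a b * Real.log (∑ y, condA ν a y * condB ν b y / prY ν y)
      = ∑ a, ∑ b, jAB ν a b * Real.log (jAB ν a b / (prA ν a * prB ν b)) := by
  simp_rw [hci.sum_condA_mul_condB_div_prY hY]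
  rfl

/-- Under conditional independence, the honest expected payment of the common ground
mechanism equals the Shannon mutual information `I(X_A;X_B)`. -/
theorem stmt_10 [Fintype SA] [Fintype SB] [Fintype S] [Nonempty SA] [Nonempty SB] [Nonempty S]
    (ν : SA → SB → S → ℝ) (hν : IsPMF ν)
    (hAB : ∀ a b, 0 < jAB ν a b) (hY : ∀ y, 0 < prY ν y)
    (hci : CondIndep ν) :
    ∑ a, ∑ b, jAB ν a b * Real.log (∑ y, condA ν a y * condB ν b y / prY ν y)
      = ∑ a, ∑ b, jAB ν a b * Real.log (jAB ν a b / (prA ν a * prB ν b)) :=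
  stmt_10_general ν hY hci
end
end

section
/- Assume X_A and X_B are conditionally independent given Y, Pr[Y=y|X_B=x_B] > 0 for all x_B, y, and the prior is stable. If x_A* ∈ Σ_A and q̂ ∈ Δ_Σ satisfy q̂ ≠ (Pr[Y=y|X_A=x_A*])_y, then Σ_{x_B} Pr[X_B=x_B|X_A=x_A*]·log(Σ_y q̂(y)·Pr[Y=y|X_B=x_B]/Pr[Y=y]) < Σ_{x_B} Pr[X_B=x_B|X_A=x_A*]·log(K(x_A*,x_B)). That is, given that Bob reports truthfully, an agent who observes X_A = x_A* and misreports her forecast earns strictly less conditional expected payment in the common ground mechanism than by reporting her Bayesian posterior. -/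
noncomputable section

variable {SA SB S : Type*}

/-!
The truthful report `Pr[Y | X_A = x_A*]` agrees with Bob's posteriors exactly in `K(x_A*, ·)`
(conditional independence), while the `Pr[X_B]`-weighted agreement of any report `q̂` sums to
`Σ_y q̂(y) = 1`. Since `Pr[x_B | x_A*] / K(x_A*, x_B) = Pr[x_B]`, Gibbs' inequality
`log t ≤ t - 1` with weights `Pr[x_B | x_A*]` gives the claim with `≤`, and strictly unless the
agreement of `q̂` equals `K(x_A*, ·)`. That equality would make `q̂` a second solution of the
agreement system with Bob's side fixed, which stability excludes.
-/

theorem sum_mul_log_lt_sum_mul_log {ι : Type*} [Fintype ι] {w x y : ι → ℝ}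
    (hw : ∀ i, 0 < w i) (hx : ∀ i, 0 < x i) (hy : ∀ i, 0 < y i)
    (hsum : ∑ i, w i * (x i / y i) ≤ ∑ i, w i) (hne : x ≠ y) :
    ∑ i, w i * Real.log (x i) < ∑ i, w i * Real.log (y i) := by
  obtain ⟨i₀, hi₀⟩ := Function.ne_iff.mp hne
  have hlog : ∀ i, w i * Real.log (x i) - w i * Real.log (y i) = w i * Real.log (x i / y i) :=
    fun i => by rw [Real.log_div (hx i).ne' (hy i).ne']; ring
  have hle : ∀ i, w i * Real.log (x i / y i) ≤ w i * (x i / y i - 1) := fun i =>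
    mul_le_mul_of_nonneg_left (Real.log_le_sub_one_of_pos (div_pos (hx i) (hy i))) (hw i).le
  have hlt : w i₀ * Real.log (x i₀ / y i₀) < w i₀ * (x i₀ / y i₀ - 1) :=
    mul_lt_mul_of_pos_left (Real.log_lt_sub_one_of_pos (div_pos (hx i₀) (hy i₀))
      (by rwa [Ne, div_eq_one_iff_eq (hy i₀).ne'])) (hw i₀)
  have key := Finset.sum_lt_sum (fun i _ => hle i) ⟨i₀, Finset.mem_univ _, hlt⟩
  simp only [mul_sub, mul_one, Finset.sum_sub_distrib] at key
  rw [← sub_neg, ← Finset.sum_sub_distrib]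
  simp only [hlog]
  linarith

theorem IsProbVec.exists_pos {T : Type*} [Fintype T] {p : T → ℝ} (hp : IsProbVec p) :
    ∃ t, 0 < p t := by
  by_contra! h
  linarith [Finset.sum_nonpos fun t (_ : t ∈ Finset.univ) => h t, hp.2]

section

variable (ν : SA → SB → S → ℝ)

theorem prA_eq_sum_jAB [Fintype SB] [Fintype S] (a : SA) : prA ν a = ∑ b, jAB ν a b := rfl

theorem prB_eq_sum_jAB [Fintype SA] [Fintype S] (b : SB) : prB ν b = ∑ a, jAB ν a b := rfl

theorem sum_jAY [Fintype SB] [Fintype S] (a : SA) : ∑ y, jAY ν a y = prA ν a := Finset.sum_comm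

theorem sum_jBY [Fintype SA] [Fintype SB] (y : S) : ∑ b, jBY ν b y = prY ν y := Finset.sum_comm

variable {ν}

theorem prA_pos [Fintype SB] [Fintype S] [Nonempty SB]
    (hAB : ∀ a b, 0 < jAB ν a b) (a : SA) : 0 < prA ν a := by
  rw [prA_eq_sum_jAB]
  exact Finset.sum_pos (fun b _ => hAB a b) Finset.univ_nonempty

theorem prB_pos [Fintype SA] [Fintype S] [Nonempty SA]
    (hAB : ∀ a b, 0 < jAB ν a b) (b : SB) : 0 < prB ν b := by
  rw [prB_eq_sum_jAB]
  exact Finset.sum_pos (fun a _ => hAB a b) Finset.univ_nonempty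

theorem K_pos [Fintype SA] [Fintype SB] [Fintype S] {a : SA} {b : SB}
    (hab : 0 < jAB ν a b) (ha : 0 < prA ν a) (hb : 0 < prB ν b) :
    0 < K ν a b :=
  div_pos hab (mul_pos ha hb)

theorem div_prA_div_K [Fintype SA] [Fintype SB] [Fintype S] {a : SA} {b : SB}
    (hab : 0 < jAB ν a b) (ha : 0 < prA ν a) (hb : 0 < prB ν b) :
    jAB ν a b / prA ν a / K ν a b = prB ν b := by
  rw [K]
  field_simp [hab.ne', ha.ne', hb.ne']

theorem isProbVec_condA [Fintype SB] [Fintype S]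
    (hν : ∀ a b y, 0 ≤ ν a b y) {a : SA} (ha : 0 < prA ν a) :
    IsProbVec (condA ν a) :=
  ⟨fun y => div_nonneg (Finset.sum_nonneg fun b _ => hν a b y) ha.le, by
    simp only [condA, ← Finset.sum_div, sum_jAY, div_self ha.ne']⟩

theorem sum_condA_mul_condB_div_prY [Fintype SA] [Fintype SB] [Fintype S]
    (hci : CondIndep ν) (hY : ∀ y, 0 < prY ν y)
    {a : SA} {b : SB} (ha : 0 < prA ν a) (hb : 0 < prB ν b) :
    ∑ y, condA ν a y * condB ν b y / prY ν y = K ν a b := by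
  have hfactor : ∀ y, ν a b y = jAY ν a y * jBY ν b y / prY ν y := fun y => by
    have h := hci a b y
    field_simp [(hY y).ne'] at h ⊢
    linarith
  rw [K, jAB, Finset.sum_div]
  refine Finset.sum_congr rfl fun y _ => ?_
  rw [hfactor y, condA, condB]
  field_simp [ha.ne', hb.ne']

theorem sum_prB_mul_agreement [Fintype SA] [Fintype SB] [Fintype S]
    (hprB : ∀ b, 0 < prB ν b) (hY : ∀ y, 0 < prY ν y) (q : S → ℝ) :
    ∑ b, prB ν b * ∑ y, q y * condB ν b y / prY ν y = ∑ y, q y :=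
  calc ∑ b, prB ν b * ∑ y, q y * condB ν b y / prY ν y
      = ∑ b, ∑ y, q y / prY ν y * (prB ν b * condB ν b y) := by
        simp only [Finset.mul_sum]
        exact Finset.sum_congr rfl fun b _ => Finset.sum_congr rfl fun y _ => by ring
    _ = ∑ y, q y / prY ν y * ∑ b, jBY ν b y := by
        rw [Finset.sum_comm]
        simp only [condB, mul_div_cancel₀ _ (hprB _).ne', Finset.mul_sum]
    _ = ∑ y, q y := by
        simp only [sum_jBY, div_mul_cancel₀ _ (hY _).ne']

theorem agreement_pos [Fintype SA] [Fintype SB] [Fintype S] {q : S → ℝ} (hq : IsProbVec q)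
    {b : SB} (hb : ∀ y, 0 < condB ν b y) (hY : ∀ y, 0 < prY ν y) :
    0 < ∑ y, q y * condB ν b y / prY ν y := by
  obtain ⟨y₀, hy₀⟩ := hq.exists_pos
  exact Finset.sum_pos' (fun y _ => div_nonneg (mul_nonneg (hq.1 y) (hb y).le) (hY y).le)
    ⟨y₀, Finset.mem_univ _, div_pos (mul_pos hy₀ (hb y₀)) (hY y₀)⟩

theorem agreement_ne_K_of_ne_condA [Fintype SA] [Fintype SB] [Fintype S]
    (hst : StablePrior ν) (hν : ∀ a b y, 0 ≤ ν a b y)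
    (hci : CondIndep ν) (hY : ∀ y, 0 < prY ν y) (hprA : ∀ a, 0 < prA ν a)
    (hprB : ∀ b, 0 < prB ν b) {a₀ : SA} {q : S → ℝ} (hq : IsProbVec q)
    (hne : q ≠ condA ν a₀) :
    (fun b => ∑ y, q y * condB ν b y / prY ν y) ≠ K ν a₀ := by
  classical
  intro hagree
  have hprob : ∀ a, IsProbVec (Function.update (condA ν) a₀ q a) := fun a => by
    rcases eq_or_ne a a₀ with rfl | h
    · simpa using hq
    · simpa [h] using isProbVec_condA hν (hprA a)
  have hsol : ∀ a b, ∑ y, Function.update (condA ν) a₀ q a y * condB ν b y / prY ν y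
      = K ν a b := fun a b => by
    rcases eq_or_ne a a₀ with rfl | h
    · simpa using congrFun hagree b
    · simpa [h] using sum_condA_mul_condB_div_prY hci hY (hprA a) (hprB b)
  exact hne (funext fun y => by simpa using hst.2 _ hprob hsol a₀ y)

end

theorem stmt_13_general [Fintype SA] [Fintype SB] [Fintype S] [Nonempty SB]
    (ν : SA → SB → S → ℝ) (hν : IsPMF ν)
    (hAB : ∀ a b, 0 < jAB ν a b) (hY : ∀ y, 0 < prY ν y)
    (hci : CondIndep ν) (hBY : ∀ b y, 0 < condB ν b y) (hst : StablePrior ν)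
    (a0 : SA) (q : S → ℝ) (hq : IsProbVec q)
    (hne : q ≠ fun y => condA ν a0 y) :
    ∑ b, (jAB ν a0 b / prA ν a0) * Real.log (∑ y, q y * condB ν b y / prY ν y)
      < ∑ b, (jAB ν a0 b / prA ν a0) * Real.log (K ν a0 b) := by
  have : Nonempty SA := ⟨a0⟩
  have hprA := prA_pos hAB
  have hprB := prB_pos hAB
  refine sum_mul_log_lt_sum_mul_log (fun b => div_pos (hAB a0 b) (hprA a0))
    (fun b => agreement_pos hq (hBY b) hY) (fun b => K_pos (hAB a0 b) (hprA a0) (hprB b))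
    (le_of_eq ?_) (agreement_ne_K_of_ne_condA hst hν.1 hci hY hprA hprB hq hne)
  calc ∑ b, jAB ν a0 b / prA ν a0 * ((∑ y, q y * condB ν b y / prY ν y) / K ν a0 b)
      = ∑ b, prB ν b * ∑ y, q y * condB ν b y / prY ν y := by
        refine Finset.sum_congr rfl fun b _ => ?_
        rw [← div_prA_div_K (hAB a0 b) (hprA a0) (hprB b)]
        ring
    _ = 1 := by rw [sum_prB_mul_agreement hprB hY, hq.2]
    _ = ∑ b, jAB ν a0 b / prA ν a0 := by
        rw [← Finset.sum_div, ← prA_eq_sum_jAB, div_self (hprA a0).ne']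

/-- Strict truthfulness of the common ground mechanism: under conditional
independence, positive posteriors `Pr[Y=y|X_B=b] > 0`, and a stable prior, an agent
who observes `X_A = x_A*` and misreports (`q̂ ≠ (Pr[Y=y|X_A=x_A*])_y`) earns strictly
less conditional expected payment than by reporting her Bayesian posterior (whose
conditional expected payment is `Σ_{x_B} Pr[x_B|x_A*]·log K(x_A*,x_B)`). -/
theorem stmt_13 [Fintype SA] [Fintype SB] [Fintype S] [Nonempty SA] [Nonempty SB] [Nonempty S]
    (ν : SA → SB → S → ℝ) (hν : IsPMF ν)
    (hAB : ∀ a b, 0 < jAB ν a b) (hY : ∀ y, 0 < prY ν y)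
    (hci : CondIndep ν) (hBY : ∀ b y, 0 < condB ν b y) (hst : StablePrior ν)
    (a0 : SA) (q : S → ℝ) (hq : IsProbVec q)
    (hne : q ≠ fun y => condA ν a0 y) :
    ∑ b, (jAB ν a0 b / prA ν a0) * Real.log (∑ y, q y * condB ν b y / prY ν y)
      < ∑ b, (jAB ν a0 b / prA ν a0) * Real.log (K ν a0 b) :=
  stmt_13_general ν hν hAB hY hci hBY hst a0 q hq hne
end
end

section
/- Assume X_A and X_B are conditionally independent given Y. Define h_A*(x_A)(y) = Pr[Y=y|X_A=x_A] and v_B*(x_B)(y) = Pr[X_B=x_B|Y=y]. Then v_B* satisfies the normalization constraint Σ_{x_B} v_B*(x_B)(y) = 1 for every y, and for every hypothesis pair h_A : Σ_A → Δ_Σ and v_B : Σ_B → [0,1]^Σ satisfying the normalization constraint and with Σ_y v_B(x_B)(y)·h_A(x_A)(y) > 0 for all (x_A,x_B), the expected LSR-gain satisfies G(h_A, v_B) ≤ G(h_A*, v_B*) = Σ_{x_A,x_B} Pr[X_A=x_A, X_B=x_B]·log(Pr[X_B=x_B|X_A=x_A]) (i.e., the maximum equals minus the conditional Shannon entropy of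 X_B given X_A). -/
noncomputable section

variable {SA SB S : Type*}

/-!
Under conditional independence, `Pr[X_B = b | Y = y]` weighted by `Pr[Y = y | X_A = a]` and summed
over `y` is exactly `Pr[X_B = b | X_A = a]`, so the truthful pair predicts the true conditional law
of `X_B` given `X_A`. For any other normalized pair, `b ↦ Σ_y v_B(b)(y)·h_A(a)(y)` is a
sub-probability vector on `Σ_B` for each `a`, and Gibbs' inequality (from `log x ≤ x - 1`) says
that no such vector beats the true conditional law in expected log-score.
-/

open Finset Real

theorem mul_log_le_mul_log_div_add {p q c : ℝ} (hp : 0 ≤ p) (hq : 0 < q) (hc : 0 < c) :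
    p * log q ≤ p * log (p / c) + (c * q - p) := by
  rcases hp.eq_or_lt with rfl | hp
  · simp only [zero_mul, sub_zero, zero_add]
    positivity
  have hpc : 0 < p / c := div_pos hp hc
  have hlog := log_le_sub_one_of_pos (div_pos hq hpc)
  rw [log_div hq.ne' hpc.ne'] at hlog
  have key : p * (q / (p / c) - 1) = c * q - p := by field_simp
  linarith [mul_le_mul_of_nonneg_left hlog hp.le]

theorem sum_mul_log_le_sum_mul_log_div_sum {ι : Type*} (s : Finset ι) {p q : ι → ℝ}
    (hp : ∀ i ∈ s, 0 ≤ p i) (hq : ∀ i ∈ s, 0 < q i) (hq_sum : ∑ i ∈ s, q i ≤ 1) :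
    ∑ i ∈ s, p i * log (q i) ≤ ∑ i ∈ s, p i * log (p i / ∑ j ∈ s, p j) := by
  set P := ∑ j ∈ s, p j
  rcases (sum_nonneg hp).eq_or_lt with hP | hP
  · have hzero : ∀ i ∈ s, p i = 0 := (sum_eq_zero_iff_of_nonneg hp).1 hP.symm
    have hvanish (r : ι → ℝ) : ∑ i ∈ s, p i * r i = 0 :=
      sum_eq_zero fun i hi => by rw [hzero i hi, zero_mul]
    exact ((hvanish _).trans (hvanish _).symm).le
  calc ∑ i ∈ s, p i * log (q i)
      ≤ ∑ i ∈ s, (p i * log (p i / P) + (P * q i - p i)) :=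
        sum_le_sum fun i hi => mul_log_le_mul_log_div_add (hp i hi) (hq i hi) hP
    _ = ∑ i ∈ s, p i * log (p i / P) + (P * ∑ i ∈ s, q i - P) := by
        rw [sum_add_distrib, sum_sub_distrib, mul_sum]
    _ ≤ ∑ i ∈ s, p i * log (p i / P) := by linarith [mul_le_of_le_one_right hP.le hq_sum]

theorem sum_sum_mul_eq_sum_of_sum_eq_one {ι κ : Type*} [Fintype ι] [Fintype κ]
    {v : ι → κ → ℝ} (h : κ → ℝ) (hv : ∀ k, ∑ i, v i k = 1) :
    ∑ i, ∑ k, v i k * h k = ∑ k, h k := by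
  rw [sum_comm]
  simp only [← sum_mul, hv, one_mul]

theorem sum_jBY_eq_prY [Fintype SA] [Fintype SB] (ν : SA → SB → S → ℝ) (y : S) :
    ∑ b, jBY ν b y = prY ν y :=
  sum_comm

theorem CondIndep.eq_mul_div [Fintype SA] [Fintype SB] {ν : SA → SB → S → ℝ}
    (hci : CondIndep ν) (hY : ∀ y, 0 < prY ν y) (a : SA) (b : SB) (y : S) :
    ν a b y = jAY ν a y * jBY ν b y / prY ν y := by
  have h := hci a b y
  field_simp [(hY y).ne'] at h ⊢
  linear_combination h

theorem CondIndep.sum_jBY_div_mul_condA [Fintype SA] [Fintype SB] [Fintype S]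
    {ν : SA → SB → S → ℝ} (hci : CondIndep ν) (hY : ∀ y, 0 < prY ν y) (a : SA) (b : SB) :
    ∑ y, jBY ν b y / prY ν y * condA ν a y = jAB ν a b / prA ν a := by
  simp only [condA, jAB, sum_div]
  refine sum_congr rfl fun y _ => ?_
  rw [hci.eq_mul_div hY]
  ring

theorem stmt_14_general [Fintype SA] [Fintype SB] [Fintype S]
    (ν : SA → SB → S → ℝ)
    (hAB : ∀ a b, 0 < jAB ν a b) (hY : ∀ y, 0 < prY ν y)
    (hci : CondIndep ν) :
    (∀ y, ∑ b, jBY ν b y / prY ν y = 1)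
    ∧ (∀ (hA' : SA → S → ℝ) (vB : SB → S → ℝ),
        (∀ a, IsProbVec (hA' a)) →
        (∀ b y, 0 ≤ vB b y ∧ vB b y ≤ 1) →
        (∀ y, ∑ b, vB b y = 1) →
        (∀ a b, 0 < ∑ y, vB b y * hA' a y) →
        ∑ a, ∑ b, jAB ν a b * Real.log (∑ y, vB b y * hA' a y)
          ≤ ∑ a, ∑ b, jAB ν a b * Real.log (∑ y, (jBY ν b y / prY ν y) * condA ν a y))
    ∧ ∑ a, ∑ b, jAB ν a b * Real.log (∑ y, (jBY ν b y / prY ν y) * condA ν a y)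
        = ∑ a, ∑ b, jAB ν a b * Real.log (jAB ν a b / prA ν a) := by
  have htruthful := hci.sum_jBY_div_mul_condA hY
  refine ⟨fun y => by rw [← sum_div, sum_jBY_eq_prY, div_self (hY y).ne'],
    fun hA' vB hA'_prob _ hvB_norm hpos => sum_le_sum fun a _ => ?_, by simp only [htruthful]⟩
  simp only [htruthful]
  have hq_sum : ∑ b, ∑ y, vB b y * hA' a y = 1 := by
    rw [sum_sum_mul_eq_sum_of_sum_eq_one _ hvB_norm, (hA'_prob a).2]
  exact sum_mul_log_le_sum_mul_log_div_sum univ (fun b _ => (hAB a b).le)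
    (fun b _ => hpos a b) hq_sum.le

/-- Theorem 6.1 (LSR-gain / MLE): under conditional independence, the truthful pair
`h_A*(a)(y) = Pr[Y=y|X_A=a]`, `v_B*(b)(y) = Pr[X_B=b|Y=y]` satisfies the normalization
constraint and maximizes the expected LSR-gain over all normalized hypothesis pairs
with positive inner sums; the maximum equals
`Σ_{a,b} Pr[a,b]·log Pr[X_B=b|X_A=a]` (minus the conditional entropy `H(X_B|X_A)`). -/
theorem stmt_14 [Fintype SA] [Fintype SB] [Fintype S] [Nonempty SA] [Nonempty SB] [Nonempty S]
    (ν : SA → SB → S → ℝ) (hν : IsPMF ν)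
    (hAB : ∀ a b, 0 < jAB ν a b) (hY : ∀ y, 0 < prY ν y)
    (hci : CondIndep ν) :
    (∀ y, ∑ b, jBY ν b y / prY ν y = 1)
    ∧ (∀ (hA' : SA → S → ℝ) (vB : SB → S → ℝ),
        (∀ a, IsProbVec (hA' a)) →
        (∀ b y, 0 ≤ vB b y ∧ vB b y ≤ 1) →
        (∀ y, ∑ b, vB b y = 1) →
        (∀ a b, 0 < ∑ y, vB b y * hA' a y) →
        ∑ a, ∑ b, jAB ν a b * Real.log (∑ y, vB b y * hA' a y)
          ≤ ∑ a, ∑ b, jAB ν a b * Real.log (∑ y, (jBY ν b y / prY ν y) * condA ν a y))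
    ∧ ∑ a, ∑ b, jAB ν a b * Real.log (∑ y, (jBY ν b y / prY ν y) * condA ν a y)
        = ∑ a, ∑ b, jAB ν a b * Real.log (jAB ν a b / prA ν a) :=
  stmt_14_general ν hAB hY hci
end
end

section
/- Assume X_A and X_B are conditionally independent given Y, and let PS : Σ_B × Δ_{Σ_B} → ℝ be a proper scoring rule. Define h_A*(x_A)(y) = Pr[Y=y|X_A=x_A] and v_B*(x_B)(y) = Pr[X_B=x_B|Y=y]. Then for every hypothesis pair h_A : Σ_A → Δ_Σ and v_B : Σ_B → [0,1]^Σ satisfying the normalization constraint: (i) for each x_A, the vector q_{x_A} := (Σ_y v_B(x_B)(y)·h_A(x_A)(y))_{x_B∈Σ_B} lies in Δ_{Σ_B}; (ii) the vector q*_{x_A} built from (h_A*, v_B*) satisfies q*_{x_A}(x_B) = Pr[X_B=x_B|X_A=x_A]; and (iii) the expected PS-gain satisfies Σ_{x_A,x_B} Pr[X_A=x_A, X_B=x_B]·PS(x_B, q_{x_A}) ≤ Σ_{x_A,x_B} Pr[X_A=x_A, X_B=x_B]·PS(x_B, q*_{x_A}), so (h_A*, v_B*) is a maximizer of the expected PS-gain.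 -/
/-!
Conditional independence gives `Pr[b | y] · Pr[y | a] = Pr[a, b, y] / Pr[a]`, so summing over `y`
the truthful forecast `q*_a` is exactly the conditional law `Pr[· | X_A = a]`. Conditioning on
`X_A = a`, the expected score of any forecast `q_a` is `Pr[a] · Σ_b Pr[b | a] · PS(b, q_a)`, which
properness bounds by the same expression at `q_a = Pr[· | a]`; summing over `a` gives (iii).
-/

noncomputable section

variable {SA SB S : Type*}

def IsProperScoringRule {T : Type*} [Fintype T] (PS : T → (T → ℝ) → ℝ) : Prop :=
  ∀ p q : T → ℝ, IsProbVec p → IsProbVec q → ∑ t, p t * PS t q ≤ ∑ t, p t * PS t p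

theorem IsProperScoringRule.sum_mul_le {T : Type*} [Fintype T] {PS : T → (T → ℝ) → ℝ}
    (hPS : IsProperScoringRule PS) {w q : T → ℝ} {c : ℝ} (hc : 0 < c)
    (hw : IsProbVec fun t => w t / c) (hq : IsProbVec q) :
    ∑ t, w t * PS t q ≤ ∑ t, w t * PS t (fun t => w t / c) := by
  have hscale : ∀ p : T → ℝ, ∑ t, w t * PS t p = c * ∑ t, w t / c * PS t p := by
    intro p
    rw [Finset.mul_sum]
    exact Finset.sum_congr rfl fun t _ => by field_simp
  rw [hscale, hscale]
  exact mul_le_mul_of_nonneg_left (hPS _ _ hw hq) hc.le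

theorem isProbVec_sum_mul_of_sum_eq_one {T : Type*} [Fintype T] [Fintype S]
    {v : T → S → ℝ} {h : S → ℝ} (hv : ∀ t y, 0 ≤ v t y) (hv_sum : ∀ y, ∑ t, v t y = 1)
    (hh : IsProbVec h) : IsProbVec fun t => ∑ y, v t y * h y := by
  refine ⟨fun t => Finset.sum_nonneg fun y _ => mul_nonneg (hv t y) (hh.1 y), ?_⟩
  calc ∑ t, ∑ y, v t y * h y = ∑ y, (∑ t, v t y) * h y := by
        rw [Finset.sum_comm]; simp only [Finset.sum_mul]
    _ = 1 := by simp only [hv_sum, one_mul, hh.2]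

section
variable [Fintype SA] [Fintype SB] [Fintype S] {ν : SA → SB → S → ℝ}

theorem IsPMF.isProbVec_jAB_div_prA (hν : IsPMF ν) {a : SA} (ha : 0 < prA ν a) :
    IsProbVec fun b => jAB ν a b / prA ν a := by
  refine ⟨fun b => div_nonneg (Finset.sum_nonneg fun y _ => hν.1 a b y) ha.le, ?_⟩
  rw [← Finset.sum_div, div_eq_one_iff_eq ha.ne']
  rfl

theorem CondIndep.jBY_div_prY_mul_condA (hci : CondIndep ν) {a : SA} {b : SB} {y : S}
    (ha : prA ν a ≠ 0) (hy : prY ν y ≠ 0) :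
    jBY ν b y / prY ν y * condA ν a y = ν a b y / prA ν a := by
  have h := hci a b y
  rw [condA]
  field_simp at h ⊢
  linear_combination -h

theorem CondIndep.sum_jBY_div_prY_mul_condA (hci : CondIndep ν) {a : SA} (b : SB)
    (ha : prA ν a ≠ 0) (hY : ∀ y, prY ν y ≠ 0) :
    ∑ y, jBY ν b y / prY ν y * condA ν a y = jAB ν a b / prA ν a := by
  simp only [hci.jBY_div_prY_mul_condA ha (hY _), jAB, Finset.sum_div]

end

theorem stmt_15_general [Fintype SA] [Fintype SB] [Fintype S]
    (ν : SA → SB → S → ℝ) (hν : IsPMF ν)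
    (hA : ∀ a, 0 < prA ν a) (hY : ∀ y, 0 < prY ν y)
    (hci : CondIndep ν)
    (PS : SB → (SB → ℝ) → ℝ)
    (hPS : ∀ p q : SB → ℝ, IsProbVec p → IsProbVec q →
      ∑ σ, p σ * PS σ q ≤ ∑ σ, p σ * PS σ p) :
    ∀ (hA' : SA → S → ℝ) (vB : SB → S → ℝ),
      (∀ a, IsProbVec (hA' a)) →
      (∀ b y, 0 ≤ vB b y ∧ vB b y ≤ 1) →
      (∀ y, ∑ b, vB b y = 1) →
      (∀ a, IsProbVec (fun b => ∑ y, vB b y * hA' a y))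
      ∧ (∀ a b, (∑ y, (jBY ν b y / prY ν y) * condA ν a y) = jAB ν a b / prA ν a)
      ∧ (∑ a, ∑ b, jAB ν a b * PS b (fun b' => ∑ y, vB b' y * hA' a y)
          ≤ ∑ a, ∑ b, jAB ν a b * PS b (fun b' => ∑ y, (jBY ν b' y / prY ν y) * condA ν a y)) := by
  intro hA' vB hA'_prob hvB_bounds hvB_sum
  have hq : ∀ a, IsProbVec fun b => ∑ y, vB b y * hA' a y := fun a =>
    isProbVec_sum_mul_of_sum_eq_one (fun b y => (hvB_bounds b y).1) hvB_sum (hA'_prob a)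
  have hq_star : ∀ a b, ∑ y, jBY ν b y / prY ν y * condA ν a y = jAB ν a b / prA ν a :=
    fun a b => hci.sum_jBY_div_prY_mul_condA b (hA a).ne' fun y => (hY y).ne'
  refine ⟨hq, hq_star, Finset.sum_le_sum fun a _ => ?_⟩
  simp only [hq_star]
  exact IsProperScoringRule.sum_mul_le hPS (hA a) (hν.isProbVec_jAB_div_prA (hA a)) (hq a)

/-- PS-gain: under conditional independence, for any proper scoring rule `PS` on
`Σ_B` and any normalized hypothesis pair `(h_A, v_B)`:
(i) each `q_{x_A} = (Σ_y v_B(x_B)(y)·h_A(x_A)(y))_{x_B}` is a probability vector on `Σ_B`;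
(ii) the truthful pair yields `q*_{x_A}(x_B) = Pr[X_B=x_B|X_A=x_A]`; and
(iii) the expected PS-gain of `(h_A, v_B)` is at most that of the truthful pair. -/
theorem stmt_15 [Fintype SA] [Fintype SB] [Fintype S] [Nonempty SA] [Nonempty SB] [Nonempty S]
    (ν : SA → SB → S → ℝ) (hν : IsPMF ν)
    (hA : ∀ a, 0 < prA ν a) (hB : ∀ b, 0 < prB ν b) (hY : ∀ y, 0 < prY ν y)
    (hci : CondIndep ν)
    (PS : SB → (SB → ℝ) → ℝ)
    (hPS : ∀ p q : SB → ℝ, IsProbVec p → IsProbVec q →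
      ∑ σ, p σ * PS σ q ≤ ∑ σ, p σ * PS σ p) :
    ∀ (hA' : SA → S → ℝ) (vB : SB → S → ℝ),
      (∀ a, IsProbVec (hA' a)) →
      (∀ b y, 0 ≤ vB b y ∧ vB b y ≤ 1) →
      (∀ y, ∑ b, vB b y = 1) →
      (∀ a, IsProbVec (fun b => ∑ y, vB b y * hA' a y))
      ∧ (∀ a b, (∑ y, (jBY ν b y / prY ν y) * condA ν a y) = jAB ν a b / prA ν a)
      ∧ (∑ a, ∑ b, jAB ν a b * PS b (fun b' => ∑ y, vB b' y * hA' a y)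
          ≤ ∑ a, ∑ b, jAB ν a b * PS b (fun b' => ∑ y, (jBY ν b' y / prY ν y) * condA ν a y)) :=
  stmt_15_general ν hν hA hY hci PS hPS
end
end
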